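/- Let r₀ = 1/40. There exist constants C > 0 and λ > 0 such that for every r with 0 ≤ r ≤ r₀ and every t ≥ 0, the matrix exponential satisfies ‖exp(−t·A(r))‖ ≤ C e^{−λ r² t}, where ‖·‖ is the operator norm on 5×5 real matrices. -/

import Mathlib

noncomputable section

/-- The matrix `𝒜(ξ)` of the linearized NSF–P1 system at a frequency of
modulus `r = |ξ|`. -/
def Amat (r : ℝ) : Matrix (Fin 5) (Fin 5) ℝ :=
  !![0,  r,     0,     0,  0;
     -r, 3*r^2, -r,    0,  -1;
     0,  r,     r^2+4, -1, 0;
     0,  0,     -4,    1,  r;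
     0,  0,     0,     -r, 1]

/-- `ℬ(ξ) = −𝒜(ξ)`. -/
def Bmat (r : ℝ) : Matrix (Fin 5) (Fin 5) ℝ := -Amat r

/-!
The quadratic form `E(y) = yᵀ P(r) y`, `P(r) = lyapunovMatrix r`, is a Lyapunov functional for
`y' = -A(r) y`: it is comparable to `|y|²` uniformly in `r ≤ 1/40`, and a sum-of-squares
certificate shows that it dissipates at rate at least `r²/100` times itself. Hence
`E(y(t)) ≤ e^{-r² t/100} E(y(0))`, which turns into the heat-like bound on `|y(t)|`.
-/

open Matrix

section Lyapunov

variable {n : Type*} [Fintype n] [DecidableEq n]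

theorem hasDerivAt_dotProduct_mulVec {y : ℝ → n → ℝ} {y' : n → ℝ} {t : ℝ}
    (hy : HasDerivAt y y' t) (P : Matrix n n ℝ) :
    HasDerivAt (fun τ => y τ ⬝ᵥ P *ᵥ y τ) (y' ⬝ᵥ P *ᵥ y t + y t ⬝ᵥ P *ᵥ y') t := by
  have h := (toLinearMap₂' ℝ P).toContinuousBilinearMap.hasDerivAt_of_bilinear
    (fun _ => hy) (fun _ => hy)
  simpa [toLinearMap₂'_apply', add_comm] using h

theorem dotProduct_mulVec_le_of_hasDerivAt {B P : Matrix n n ℝ} {μ : ℝ}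
    (hdiss : ∀ w, (B *ᵥ w) ⬝ᵥ P *ᵥ w + w ⬝ᵥ P *ᵥ (B *ᵥ w) ≤ -μ * (w ⬝ᵥ P *ᵥ w))
    {y : ℝ → n → ℝ} (hy : ∀ τ, HasDerivAt y (B *ᵥ y τ) τ) {t : ℝ} (ht : 0 ≤ t) :
    y t ⬝ᵥ P *ᵥ y t ≤ Real.exp (-μ * t) * (y 0 ⬝ᵥ P *ᵥ y 0) := by
  have hF : ∀ τ, HasDerivAt (fun σ => Real.exp (μ * σ) * (y σ ⬝ᵥ P *ᵥ y σ))
      (Real.exp (μ * τ) * μ * (y τ ⬝ᵥ P *ᵥ y τ) +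
        Real.exp (μ * τ) * ((B *ᵥ y τ) ⬝ᵥ P *ᵥ y τ + y τ ⬝ᵥ P *ᵥ (B *ᵥ y τ))) τ :=
    fun τ => (((hasDerivAt_id τ).const_mul μ).exp.congr_deriv (by simp)).mul
      (hasDerivAt_dotProduct_mulVec (hy τ) P)
  have hanti : Antitone fun σ => Real.exp (μ * σ) * (y σ ⬝ᵥ P *ᵥ y σ) := by
    refine antitone_of_deriv_nonpos (fun τ => (hF τ).differentiableAt) fun τ => ?_
    rw [(hF τ).deriv]
    linarith [mul_le_mul_of_nonneg_left (hdiss (y τ)) (Real.exp_pos (μ * τ)).le]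
  have h : Real.exp (μ * t) * (y t ⬝ᵥ P *ᵥ y t) ≤ y 0 ⬝ᵥ P *ᵥ y 0 := by
    simpa only [mul_zero, Real.exp_zero, one_mul] using hanti ht
  rwa [neg_mul, Real.exp_neg, ← div_eq_inv_mul, le_div_iff₀' (Real.exp_pos _)]

theorem hasDerivAt_exp_smul_mulVec (B : Matrix n n ℝ) (v : n → ℝ) (t : ℝ) :
    HasDerivAt (fun τ : ℝ => NormedSpace.exp (τ • B) *ᵥ v)
      (B *ᵥ (NormedSpace.exp (t • B) *ᵥ v)) t := by
  -- any algebra norm on matrices induces their product topology, so the choice is harmless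
  let _ := Matrix.linftyOpNormedRing (n := n) (α := ℝ)
  let _ := Matrix.linftyOpNormedAlgebra (n := n) (R := ℝ) (α := ℝ)
  have h := (((mulVecBilin ℝ ℝ).flip v).toContinuousLinearMap.hasFDerivAt).comp_hasDerivAt t
    (hasDerivAt_exp_smul_const' (𝕂 := ℝ) B t)
  exact h.congr_deriv (mulVec_mulVec _ _ _).symm

theorem sqrt_sum_sq_exp_smul_mulVec_le {B P : Matrix n n ℝ} {μ c K : ℝ} (hc : 0 < c)
    (hdiss : ∀ w, (B *ᵥ w) ⬝ᵥ P *ᵥ w + w ⬝ᵥ P *ᵥ (B *ᵥ w) ≤ -μ * (w ⬝ᵥ P *ᵥ w))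
    (hlow : ∀ w, c * (w ⬝ᵥ w) ≤ w ⬝ᵥ P *ᵥ w) (hup : ∀ w, w ⬝ᵥ P *ᵥ w ≤ K * (w ⬝ᵥ w))
    (v : n → ℝ) {t : ℝ} (ht : 0 ≤ t) :
    √(∑ i, (NormedSpace.exp (t • B) *ᵥ v) i ^ 2) ≤
      √(K / c) * Real.exp (-(μ / 2) * t) * √(∑ i, v i ^ 2) := by
  set y := NormedSpace.exp (t • B) *ᵥ v
  have hsq : y ⬝ᵥ y ≤ K / c * Real.exp (-μ * t) * (v ⬝ᵥ v) :=
    calc y ⬝ᵥ y ≤ (y ⬝ᵥ P *ᵥ y) / c := (le_div_iff₀' hc).2 (hlow y)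
      _ ≤ Real.exp (-μ * t) * (v ⬝ᵥ P *ᵥ v) / c := by
        gcongr
        simpa only [zero_smul, NormedSpace.exp_zero, one_mulVec] using
          dotProduct_mulVec_le_of_hasDerivAt hdiss (hasDerivAt_exp_smul_mulVec B v) ht
      _ ≤ Real.exp (-μ * t) * (K * (v ⬝ᵥ v)) / c := by gcongr; exact hup v
      _ = K / c * Real.exp (-μ * t) * (v ⬝ᵥ v) := by ring
  rw [show -(μ / 2) * t = -μ * t / 2 by ring, Real.exp_half,
    ← Real.sqrt_mul' _ (Real.exp_pos _).le,
    ← Real.sqrt_mul' _ (Finset.sum_nonneg fun i _ => sq_nonneg (v i))]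
  exact Real.sqrt_le_sqrt (by simpa only [dotProduct, sq] using hsq)

end Lyapunov

def lyapunovMatrix (r : ℝ) : Matrix (Fin 5) (Fin 5) ℝ :=
  !![1,  -r, 0,  0,  0;
     -r, 1,  0,  0,  1;
     0,  0,  17, -3, 0;
     0,  0,  -3, 2,  0;
     0,  1,  0,  0,  5/4]

theorem lyapunovMatrix_coercive {r : ℝ} (hr0 : 0 ≤ r) (hr1 : r ≤ 1/40) (w : Fin 5 → ℝ) :
    1/20 * (w ⬝ᵥ w) ≤ w ⬝ᵥ lyapunovMatrix r *ᵥ w := by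
  simp only [lyapunovMatrix, mulVec, dotProduct, Fin.sum_univ_five, of_apply, cons_val',
    cons_val_zero, cons_val_one, cons_val, cons_val_fin_one]
  generalize w 0 = a, w 1 = b, w 2 = c, w 3 = d, w 4 = e
  linear_combination mul_nonneg hr0 (sq_nonneg (a - b)) + sq_nonneg (12/5 * c - 5/4 * d)
    + sq_nonneg (19/20 * b + 20/19 * e)
    + mul_nonneg (by linarith : (0:ℝ) ≤ 19/20 - r) (sq_nonneg a)
    + mul_nonneg (by linarith : (0:ℝ) ≤ 19/400 - r) (sq_nonneg b)
    + 1119/100 * sq_nonneg c + 31/80 * sq_nonneg d + 166/1805 * sq_nonneg e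

theorem lyapunovMatrix_bounded {r : ℝ} (hr0 : 0 ≤ r) (hr1 : r ≤ 1/40) (w : Fin 5 → ℝ) :
    w ⬝ᵥ lyapunovMatrix r *ᵥ w ≤ 21 * (w ⬝ᵥ w) := by
  simp only [lyapunovMatrix, mulVec, dotProduct, Fin.sum_univ_five, of_apply, cons_val',
    cons_val_zero, cons_val_one, cons_val, cons_val_fin_one]
  generalize w 0 = a, w 1 = b, w 2 = c, w 3 = d, w 4 = e
  linear_combination mul_nonneg hr0 (sq_nonneg (a + b)) + sq_nonneg (2 * c + 3/2 * d)
    + sq_nonneg (b - e)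
    + mul_nonneg (by linarith : (0:ℝ) ≤ 20 - r) (sq_nonneg a)
    + mul_nonneg (by linarith : (0:ℝ) ≤ 19 - r) (sq_nonneg b)
    + 67/4 * sq_nonneg d + 75/4 * sq_nonneg e

theorem Bmat_dissipation {r : ℝ} (hr0 : 0 ≤ r) (hr1 : r ≤ 1/40) (w : Fin 5 → ℝ) :
    (Bmat r *ᵥ w) ⬝ᵥ lyapunovMatrix r *ᵥ w + w ⬝ᵥ lyapunovMatrix r *ᵥ (Bmat r *ᵥ w)
      ≤ -(r^2/100) * (w ⬝ᵥ lyapunovMatrix r *ᵥ w) := by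
  have h1 : (0:ℝ) ≤ 37/50 - 299/100 * r := by linarith
  have h2 : (0:ℝ) ≤ 26/9 - 19/20 * r - 1457/100 * r^2 := by nlinarith
  have h3 : (0:ℝ) ≤ 1/4 - 19/20 * r - 89526/10000 * r^2 := by nlinarith
  simp only [Bmat, Amat, lyapunovMatrix, mulVec, dotProduct, Fin.sum_univ_five, Matrix.neg_apply,
    of_apply, cons_val', cons_val_zero, cons_val_one, cons_val, cons_val_fin_one]
  generalize w 0 = a, w 1 = b, w 2 = c, w 3 = d, w 4 = e
  linear_combination sq_nonneg (3/2 * r * b - 8/3 * (-4 * c + d))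
    + mul_nonneg (by positivity : (0:ℝ) ≤ 19/20 * r) (sq_nonneg (-4 * c + d + e))
    + sq_nonneg (2/5 * r * (c + d) - 1/2 * e)
    + sq_nonneg (1/4 * r * (c + d) - 4 * r * (-4 * c + d))
    + sq_nonneg (r * a + 1/5 * r * (c + d))
    + sq_nonneg (1/2 * r * a - 2/5 * r * (-4 * c + d))
    + mul_nonneg (by positivity : (0:ℝ) ≤ 299/100 * r^3) (sq_nonneg (a - b))
    + sq_nonneg (r * b + 299/100 * r * e)
    + mul_nonneg h1 (sq_nonneg (r * a))
    + mul_nonneg h1 (sq_nonneg (r * b))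
    + 51/400 * sq_nonneg (r * (c + d))
    + mul_nonneg h2 (sq_nonneg (-4 * c + d))
    + mul_nonneg h3 (sq_nonneg e)

/-- **Heat-like decay of the semigroup in the low-frequency regime**
(Lemma 4.2, linear part): with `r₀ = 1/40`, there exist `C > 0` and `λ > 0`
such that for all `0 ≤ r ≤ r₀` and `t ≥ 0` the operator norm of `e^{−t𝒜(r)}`
(expressed through its action on vectors, with Euclidean norms) is at most
`C e^{−λ r² t}`. -/
theorem semigroup_decay_low_frequency :
    ∃ C lam : ℝ, 0 < C ∧ 0 < lam ∧
      ∀ r : ℝ, 0 ≤ r → r ≤ (1/40 : ℝ) → ∀ t : ℝ, 0 ≤ t → ∀ v : Fin 5 → ℝ,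
        Real.sqrt (∑ i, ((NormedSpace.exp ((-t) • Amat r)).mulVec v i) ^ 2) ≤
          C * Real.exp (-lam * r^2 * t) * Real.sqrt (∑ i, (v i) ^ 2) := by
  refine ⟨√(21 / (1/20)), 1/200, by positivity, by norm_num, fun r hr0 hr1 t ht v => ?_⟩
  have hdecay := sqrt_sum_sq_exp_smul_mulVec_le (by norm_num) (Bmat_dissipation hr0 hr1)
    (lyapunovMatrix_coercive hr0 hr1) (lyapunovMatrix_bounded hr0 hr1) v ht
  rw [neg_smul, ← smul_neg, ← Bmat]
  convert hdecay using 4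
  ring
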